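/- arXiv:math/0307091 — 4 statements merged into one kernel-verified Lean document; each statement's English description precedes it below -/
import Mathlib

section
/- Define H_l-valued rational functions F_i(x,y) = T_i + (q - q^{-1})/(x^{-1} y - 1) for distinct nonzero x, y in ℂ(q). Then the Yang–Baxter-type relation F_i(x,y) F_{i+1}(x,z) F_i(y,z) = F_{i+1}(y,z) F_i(x,z) F_{i+1}(x,y) holds whenever all factors are defined. -/
/-!
With `d = q - q⁻¹`, the quadratic relation reads `T_i² = d T_i + 1`. Expanding
`(u + a)(v + b)(u + c)` and `(v + c)(u + b)(v + a)` for two such elements `u, v` satisfying the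
braid relation, the cubic terms agree and the difference is `(b (d + a + c) - a c) (u - v)`.
So the Yang–Baxter relation reduces to the scalar identity `b (d + a + c) = a c` for
`a = f(x,y)`, `b = f(x,z)`, `c = f(y,z)`, `f(s,t) = d / (s⁻¹ t - 1)`, which is a rational
function identity in `x, y, z`.
-/

noncomputable section

/-- The `H_l`-valued rational function `F_i(x,y) = T_i + (q - q⁻¹)/(x⁻¹ y - 1)`,
where `q = RatFunc.X`. -/
def heckeF {A : Type*} [Ring A] [Algebra (RatFunc ℂ) A] (T : ℕ → A)
    (i : ℕ) (x y : RatFunc ℂ) : A :=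
  T i + algebraMap (RatFunc ℂ) A
    ((RatFunc.X - (RatFunc.X)⁻¹) / (x⁻¹ * y - 1))

theorem mul_self_eq_of_hecke_quadratic {R A : Type*} [CommRing R] [Ring A] [Algebra R A]
    {u : A} {q q' : R} (hqq' : q * q' = 1)
    (h : (u - algebraMap R A q) * (u + algebraMap R A q') = 0) :
    u * u = (q - q') • u + 1 := by
  rw [sub_mul, mul_add, mul_add, ← Algebra.commutes, ← map_mul, hqq', map_one] at h
  rw [Algebra.smul_def, map_sub, sub_mul, ← sub_eq_zero, ← h]
  abel

theorem yangBaxter_add_algebraMap {R A : Type*} [CommRing R] [Ring A] [Algebra R A]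
    {u v : A} {d a b c : R}
    (hu : u * u = d • u + 1) (hv : v * v = d • v + 1)
    (hbraid : u * v * u = v * u * v) (hcoeff : b * (d + a + c) = a * c) :
    (u + algebraMap R A a) * (v + algebraMap R A b) * (u + algebraMap R A c) =
      (v + algebraMap R A c) * (u + algebraMap R A b) * (v + algebraMap R A a) := by
  simp only [Algebra.algebraMap_eq_smul_one, mul_add, add_mul, smul_mul_assoc,
    mul_smul_comm, one_mul, mul_one, smul_smul, hu, hv, hbraid, smul_add]
  match_scalars <;> first | ring1 | linear_combination hcoeff | linear_combination -hcoeff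

def heckeCoeff {K : Type*} [Field K] (d s t : K) : K :=
  d / (s⁻¹ * t - 1)

theorem heckeCoeff_yangBaxter {K : Type*} [Field K] {d x y z : K} (hy : y ≠ 0)
    (hxy : x ≠ y) (hxz : x ≠ z) (hyz : y ≠ z) :
    heckeCoeff d x z * (d + heckeCoeff d x y + heckeCoeff d y z) =
      heckeCoeff d x y * heckeCoeff d y z := by
  unfold heckeCoeff
  -- since `0⁻¹ = 0`, both `heckeCoeff d 0 t` and `heckeCoeff d s 0` equal `-d`
  rcases eq_or_ne x 0 with rfl | hx
  · simp only [inv_zero, zero_mul, zero_sub, div_neg, div_one]; ring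
  rcases eq_or_ne z 0 with rfl | hz
  · simp only [mul_zero, zero_sub, div_neg, div_one]; ring
  have hyx : y - x ≠ 0 := sub_ne_zero.mpr hxy.symm
  have hzx : z - x ≠ 0 := sub_ne_zero.mpr hxz.symm
  have hzy : z - y ≠ 0 := sub_ne_zero.mpr hyz.symm
  have inv_mul_sub_one : ∀ {s t : K}, s ≠ 0 → s⁻¹ * t - 1 = (t - s) / s := fun hs => by
    field_simp
  rw [inv_mul_sub_one hx, inv_mul_sub_one hx, inv_mul_sub_one hy]
  field_simp
  ring

theorem heckeF_yang_baxter_general (l : ℕ) (A : Type*) [Ring A]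
    [Algebra (RatFunc ℂ) A] (T : ℕ → A)
    (hquad : ∀ i, 1 ≤ i → i < l →
      (T i - algebraMap (RatFunc ℂ) A RatFunc.X) *
        (T i + algebraMap (RatFunc ℂ) A (RatFunc.X)⁻¹) = 0)
    (hbraid : ∀ i, 1 ≤ i → i + 1 < l →
      T i * T (i + 1) * T i = T (i + 1) * T i * T (i + 1))
    (i : ℕ) (hi1 : 1 ≤ i) (hi : i + 1 < l)
    (x y z : RatFunc ℂ)
    (hy : y ≠ 0)
    (hxy : x ≠ y) (hxz : x ≠ z) (hyz : y ≠ z) :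
    heckeF T i x y * heckeF T (i + 1) x z * heckeF T i y z =
      heckeF T (i + 1) y z * heckeF T i x z * heckeF T (i + 1) x y := by
  have hqq' : (RatFunc.X : RatFunc ℂ) * RatFunc.X⁻¹ = 1 := mul_inv_cancel₀ RatFunc.X_ne_zero
  have hu := mul_self_eq_of_hecke_quadratic hqq' (hquad i hi1 (by omega))
  have hv := mul_self_eq_of_hecke_quadratic hqq' (hquad (i + 1) (by omega) hi)
  exact yangBaxter_add_algebraMap hu hv (hbraid i hi1 hi) (heckeCoeff_yangBaxter hy hxy hxz hyz)

/-- the Yang–Baxter-type relation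
`F_i(x,y) F_{i+1}(x,z) F_i(y,z) = F_{i+1}(y,z) F_i(x,z) F_{i+1}(x,y)`
holds in the Hecke algebra whenever `x, y, z ∈ ℂ(q)` are pairwise distinct
and nonzero. -/
theorem heckeF_yang_baxter (l : ℕ) (A : Type*) [Ring A]
    [Algebra (RatFunc ℂ) A] (T : ℕ → A)
    (hquad : ∀ i, 1 ≤ i → i < l →
      (T i - algebraMap (RatFunc ℂ) A RatFunc.X) *
        (T i + algebraMap (RatFunc ℂ) A (RatFunc.X)⁻¹) = 0)
    (hbraid : ∀ i, 1 ≤ i → i + 1 < l →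
      T i * T (i + 1) * T i = T (i + 1) * T i * T (i + 1))
    (hcomm : ∀ i j, 1 ≤ i → i + 1 < j → j < l → T i * T j = T j * T i)
    (i : ℕ) (hi1 : 1 ≤ i) (hi : i + 1 < l)
    (x y z : RatFunc ℂ)
    (hx : x ≠ 0) (hy : y ≠ 0) (hz : z ≠ 0)
    (hxy : x ≠ y) (hxz : x ≠ z) (hyz : y ≠ z) :
    heckeF T i x y * heckeF T (i + 1) x z * heckeF T i y z =
      heckeF T (i + 1) y z * heckeF T i x z * heckeF T (i + 1) x y :=
  heckeF_yang_baxter_general l A T hquad hbraid i hi1 hi x y z hy hxy hxz hyz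

end
end

section
/- In the Hecke algebra H_l, the Murphy elements X_i = T_{i-1} ⋯ T_1 T_1 ⋯ T_{i-1} (with X_1 = 1) pairwise commute. -/
/-!
Writing `X_{j+1} = T_j X_j T_j`, the far-commutation relations make `X_i` commute with every
`T_k`, `k > i`, so `X_i` commutes with `X_j` for `j > i` by induction on `j` once it commutes
with `X_{i+1}`. That adjacent case follows by induction on `i` from a purely braid-theoretic
identity: if `a b a = b a b` and `x` commutes with `b` and with `a x a`, then `a x a` commutes
with `b (a x a) b`.
-/

noncomputable section

/-- The Murphy element `X_i = T_{i-1} ⋯ T_1 T_1 ⋯ T_{i-1}` (so `X_1 = 1`). -/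
def murphyX {A : Type*} [Ring A] (T : ℕ → A) (i : ℕ) : A :=
  (((List.range (i - 1)).reverse.map fun k => T (k + 1)).prod) *
    (((List.range (i - 1)).map fun k => T (k + 1)).prod)

theorem commute_braid_conj {A : Type*} [Monoid A] {a b x : A}
    (hab : a * b * a = b * a * b) (hxb : Commute x b) (hx : Commute x (a * x * a)) :
    Commute (a * x * a) (b * (a * x * a) * b) := by
  have hxa : x * a * x * a = a * x * a * x := by simpa only [mul_assoc] using hx.eq
  show a * x * a * (b * (a * x * a) * b) = b * (a * x * a) * b * (a * x * a)
  calc a * x * a * (b * (a * x * a) * b)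
      = a * x * (a * b * a) * x * a * b := by simp only [mul_assoc]
    _ = a * x * (b * a * b) * x * a * b := by rw [hab]
    _ = a * (x * b) * a * b * x * a * b := by simp only [mul_assoc]
    _ = a * (b * x) * a * b * x * a * b := by rw [hxb.eq]
    _ = a * b * x * a * (b * x) * a * b := by simp only [mul_assoc]
    _ = a * b * x * a * (x * b) * a * b := by rw [← hxb.eq]
    _ = a * b * x * a * x * (b * a * b) := by simp only [mul_assoc]
    _ = a * b * x * a * x * (a * b * a) := by rw [← hab]
    _ = a * b * (x * a * x * a) * b * a := by simp only [mul_assoc]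
    _ = a * b * (a * x * a * x) * b * a := by rw [hxa]
    _ = (a * b * a) * x * a * x * b * a := by simp only [mul_assoc]
    _ = (b * a * b) * x * a * x * b * a := by rw [hab]
    _ = b * a * b * x * a * (x * b) * a := by simp only [mul_assoc]
    _ = b * a * b * x * a * (b * x) * a := by rw [hxb.eq]
    _ = b * a * (b * x) * a * b * x * a := by simp only [mul_assoc]
    _ = b * a * (x * b) * a * b * x * a := by rw [← hxb.eq]
    _ = b * a * x * (b * a * b) * x * a := by simp only [mul_assoc]
    _ = b * a * x * (a * b * a) * x * a := by rw [← hab]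
    _ = b * (a * x * a) * b * (a * x * a) := by simp only [mul_assoc]

section Murphy

variable {A : Type*} [Ring A] (T : ℕ → A)

theorem murphyX_one : murphyX T 1 = 1 := by
  simp [murphyX]

theorem murphyX_succ {j : ℕ} (hj : 1 ≤ j) : murphyX T (j + 1) = T j * murphyX T j * T j := by
  obtain ⟨m, rfl⟩ := Nat.exists_eq_add_of_le' hj
  simp [murphyX, List.range_succ, mul_assoc]

theorem commute_murphyX_left {a : A} {i : ℕ} (h : ∀ m, 1 ≤ m → m < i → Commute (T m) a) :
    Commute (murphyX T i) a := by
  have hT : ∀ m ∈ List.range (i - 1), Commute (T (m + 1)) a := fun m hm =>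
    h (m + 1) (Nat.le_add_left 1 m) (by have := List.mem_range.mp hm; omega)
  refine (Commute.list_prod_left _ _ ?_).mul_left (Commute.list_prod_left _ _ ?_) <;>
    simpa using hT

variable {T} {l : ℕ}

theorem murphyX_commute_T
    (hcomm : ∀ i j, 1 ≤ i → i + 1 < j → j < l → T i * T j = T j * T i)
    {i k : ℕ} (hik : i < k) (hkl : k < l) : Commute (murphyX T i) (T k) :=
  commute_murphyX_left T fun m hm hmi => hcomm m k hm (by omega) hkl

theorem murphyX_commute_murphyX_succ
    (hbraid : ∀ i, 1 ≤ i → i + 1 < l → T i * T (i + 1) * T i = T (i + 1) * T i * T (i + 1))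
    (hcomm : ∀ i j, 1 ≤ i → i + 1 < j → j < l → T i * T j = T j * T i)
    {i : ℕ} (hi : 1 ≤ i) (hil : i < l) : Commute (murphyX T i) (murphyX T (i + 1)) := by
  induction i, hi using Nat.le_induction with
  | base => simp only [murphyX_one, Commute.one_left]
  | succ i hi ih =>
    rw [murphyX_succ T hi, murphyX_succ T (by omega : 1 ≤ i + 1), murphyX_succ T hi]
    refine commute_braid_conj (hbraid i hi hil) (murphyX_commute_T hcomm (by omega) hil) ?_
    simpa only [murphyX_succ T hi] using ih (by omega)

theorem murphyX_commute_of_le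
    (hbraid : ∀ i, 1 ≤ i → i + 1 < l → T i * T (i + 1) * T i = T (i + 1) * T i * T (i + 1))
    (hcomm : ∀ i j, 1 ≤ i → i + 1 < j → j < l → T i * T j = T j * T i)
    {i j : ℕ} (hi : 1 ≤ i) (hij : i ≤ j) (hjl : j ≤ l) :
    Commute (murphyX T i) (murphyX T j) := by
  induction j, hij using Nat.le_induction with
  | base => exact Commute.refl _
  | succ j hij ih =>
    rcases hij.eq_or_lt with rfl | hlt
    · exact murphyX_commute_murphyX_succ hbraid hcomm hi (by omega)
    · have hT := murphyX_commute_T hcomm hlt (by omega : j < l)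
      rw [murphyX_succ T (by omega)]
      exact (hT.mul_right (ih (by omega))).mul_right hT

end Murphy

theorem murphy_elements_commute_general (l : ℕ) (A : Type*) [Ring A]
    (T : ℕ → A)
    (hbraid : ∀ i, 1 ≤ i → i + 1 < l →
      T i * T (i + 1) * T i = T (i + 1) * T i * T (i + 1))
    (hcomm : ∀ i j, 1 ≤ i → i + 1 < j → j < l → T i * T j = T j * T i) :
    ∀ i j, 1 ≤ i → i ≤ l → 1 ≤ j → j ≤ l →
      murphyX T i * murphyX T j = murphyX T j * murphyX T i := by
  intro i j hi hil hj hjl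
  rcases le_total i j with hij | hji
  · exact (murphyX_commute_of_le hbraid hcomm hi hij hjl).eq
  · exact (murphyX_commute_of_le hbraid hcomm hj hji hil).eq.symm

/-- in the Hecke algebra `H_l`, the Murphy elements
`X_1, …, X_l` pairwise commute. -/
theorem murphy_elements_commute (l : ℕ) (A : Type*) [Ring A]
    [Algebra (RatFunc ℂ) A] (T : ℕ → A)
    (hquad : ∀ i, 1 ≤ i → i < l →
      (T i - algebraMap (RatFunc ℂ) A RatFunc.X) *
        (T i + algebraMap (RatFunc ℂ) A (RatFunc.X)⁻¹) = 0)
    (hbraid : ∀ i, 1 ≤ i → i + 1 < l →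
      T i * T (i + 1) * T i = T (i + 1) * T i * T (i + 1))
    (hcomm : ∀ i j, 1 ≤ i → i + 1 < j → j < l → T i * T j = T j * T i) :
    ∀ i j, 1 ≤ i → i ≤ l → 1 ≤ j → j ≤ l →
      murphyX T i * murphyX T j = murphyX T j * murphyX T i :=
  murphy_elements_commute_general l A T hbraid hcomm

end
end

section
/- Let λ and μ be partitions. Write ⟨c⟩ for the formal factor t − q^{2c} where t is an indeterminate. Then the product over all nodes (a,b) of the Young diagram of λ that lie outside the Young diagram of μ of the fractions ⟨−(μ_a + λ*_b − a − b + 1)⟩ / ⟨λ_a + μ*_b − a − b + 1⟩ equals 1; equivalently, the multiset of integers −(μ_a + λ*_b − a − b + 1) over these nodes coincides with the multiset of integers λ_a + μ*_b − a − b + 1 over these nodes. -/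
/-- The conjugate partition: `λ*_b = #{a ≥ 1 : λ_a ≥ b}`. -/
noncomputable def conjPart (f : ℕ → ℕ) (b : ℕ) : ℕ :=
  Set.ncard {a : ℕ | 1 ≤ a ∧ b ≤ f a}

namespace SkewAux

lemma downclosed_eq_Icc (F : Finset ℕ) (h0 : 0 ∉ F)
    (hdc : ∀ x ∈ F, ∀ y, 1 ≤ y → y ≤ x → y ∈ F) : F = Finset.Icc 1 F.card := by
  ext z
  simp only [Finset.mem_Icc]
  constructor
  · intro hz
    have hz1 : 1 ≤ z := Nat.one_le_iff_ne_zero.mpr (by rintro rfl; exact h0 hz)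
    refine ⟨hz1, ?_⟩
    have hsub : Finset.Icc 1 z ⊆ F := by
      intro y hy
      rw [Finset.mem_Icc] at hy
      exact hdc z hz y hy.1 hy.2
    have := Finset.card_le_card hsub
    simpa [Nat.card_Icc] using this
  · rintro ⟨h1, h2⟩
    by_contra hzF
    have hsub : F ⊆ Finset.Icc 1 (z - 1) := by
      intro x hx
      have hx1 : 1 ≤ x := Nat.one_le_iff_ne_zero.mpr (by rintro rfl; exact h0 hx)
      have hxz : x < z := by
        by_contra hge
        push_neg at hge
        exact hzF (hdc x hx z h1 hge)
      rw [Finset.mem_Icc]; omega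
    have := Finset.card_le_card hsub
    rw [Nat.card_Icc] at this
    omega

lemma conj_galois (f : ℕ → ℕ) (N : ℕ)
    (hanti : ∀ a b, 1 ≤ a → a ≤ b → f b ≤ f a) (hN : ∀ a, N < a → f a = 0)
    {a b : ℕ} (ha : 1 ≤ a) (hb : 1 ≤ b) : a ≤ conjPart f b ↔ b ≤ f a := by
  classical
  set F : Finset ℕ := (Finset.Icc 1 N).filter (fun x => b ≤ f x) with hF
  have hset : {x : ℕ | 1 ≤ x ∧ b ≤ f x} = ↑F := by
    ext x
    simp only [hF, Finset.coe_filter, Finset.mem_Icc, Set.mem_setOf_eq]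
    constructor
    · rintro ⟨hx1, hxb⟩
      have hxN : x ≤ N := by
        by_contra hgt; push_neg at hgt
        have := hN x hgt; omega
      exact ⟨⟨hx1, hxN⟩, hxb⟩
    · rintro ⟨⟨hx1, _⟩, hxb⟩; exact ⟨hx1, hxb⟩
  have hcard : conjPart f b = F.card := by
    rw [conjPart, hset, Set.ncard_coe_finset]
  have h0 : 0 ∉ F := by simp [hF]
  have hdc : ∀ x ∈ F, ∀ y, 1 ≤ y → y ≤ x → y ∈ F := by
    intro x hx y hy1 hyx
    simp only [hF, Finset.mem_filter, Finset.mem_Icc] at hx ⊢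
    exact ⟨⟨hy1, le_trans hyx hx.1.2⟩, le_trans hx.2 (hanti y x hy1 hyx)⟩
  have hIcc := downclosed_eq_Icc F h0 hdc
  rw [hcard]
  constructor
  · intro h
    have haF : a ∈ F := by rw [hIcc, Finset.mem_Icc]; exact ⟨ha, h⟩
    rw [hF, Finset.mem_filter] at haF
    exact haF.2
  · intro h
    have haF : a ∈ F := by
      rw [hF, Finset.mem_filter, Finset.mem_Icc]
      have haN : a ≤ N := by
        by_contra hgt; push_neg at hgt
        have := hN a hgt; omega
      exact ⟨⟨ha, haN⟩, h⟩
    rw [hIcc, Finset.mem_Icc] at haF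
    exact haF.2

lemma conj_anti (f : ℕ → ℕ) (N : ℕ)
    (hanti : ∀ a b, 1 ≤ a → a ≤ b → f b ≤ f a) (hN : ∀ a, N < a → f a = 0)
    {b b' : ℕ} (hb : 1 ≤ b) (hbb : b ≤ b') : conjPart f b' ≤ conjPart f b := by
  rcases Nat.eq_zero_or_pos (conjPart f b') with h0 | h0
  · omega
  · have hb' : 1 ≤ b' := le_trans hb hbb
    have h1 : b' ≤ f (conjPart f b') :=
      (conj_galois f N hanti hN h0 hb').mp le_rfl
    exact (conj_galois f N hanti hN h0 hb).mpr (le_trans hbb h1)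

/-- Trichotomy of particles and holes. -/
lemma maya_cases (f : ℕ → ℕ) (N : ℕ)
    (hanti : ∀ a b, 1 ≤ a → a ≤ b → f b ≤ f a) (hN : ∀ a, N < a → f a = 0)
    {a b : ℕ} (ha : 1 ≤ a) (hb : 1 ≤ b) :
    (b ≤ f a ∧ (b : ℤ) - 1 - conjPart f b < (f a : ℤ) - a) ∨
      (f a < b ∧ (f a : ℤ) - a < (b : ℤ) - 1 - conjPart f b) := by
  rcases le_or_gt b (f a) with h | h
  · left
    have hg := (conj_galois f N hanti hN ha hb).mpr h
    exact ⟨h, by omega⟩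
  · right
    have hg : ¬ a ≤ conjPart f b := by
      intro hle
      have := (conj_galois f N hanti hN ha hb).mp hle
      omega
    exact ⟨h, by omega⟩

lemma g_lt (f : ℕ → ℕ) (N : ℕ)
    (hanti : ∀ a b, 1 ≤ a → a ≤ b → f b ≤ f a) (hN : ∀ a, N < a → f a = 0)
    {b b' : ℕ} (hb : 1 ≤ b) (hbb : b < b') :
    (b : ℤ) - 1 - conjPart f b < (b' : ℤ) - 1 - conjPart f b' := by
  have := conj_anti f N hanti hN hb (le_of_lt hbb)
  omega

lemma q_lt (f : ℕ → ℕ)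
    (hanti : ∀ a b, 1 ≤ a → a ≤ b → f b ≤ f a)
    {a a' : ℕ} (ha : 1 ≤ a) (haa : a < a') :
    (f a' : ℤ) - a' < (f a : ℤ) - a := by
  have := hanti a a' ha (le_of_lt haa)
  omega

lemma maya_complete (f : ℕ → ℕ) (N : ℕ)
    (hanti : ∀ a b, 1 ≤ a → a ≤ b → f b ≤ f a) (hN : ∀ a, N < a → f a = 0)
    (v : ℤ) :
    (∃ a : ℕ, 1 ≤ a ∧ (f a : ℤ) - a = v) ∨
      (∃ b : ℕ, 1 ≤ b ∧ (b : ℤ) - 1 - conjPart f b = v) := by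
  classical
  by_cases h1 : v < -(conjPart f 1 : ℤ)
  · left
    have hc0 : (0:ℤ) ≤ (conjPart f 1 : ℤ) := Int.ofNat_nonneg _
    have hvneg : v < 0 := by omega
    refine ⟨(-v).toNat, by omega, ?_⟩
    have ha : (((-v).toNat : ℤ)) = -v := Int.toNat_of_nonneg (by omega)
    have hfa : f ((-v).toNat) = 0 := by
      by_contra h0
      have hf1 : 1 ≤ f ((-v).toNat) := Nat.one_le_iff_ne_zero.mpr h0
      have htn : 1 ≤ (-v).toNat := by omega
      have hle : (-v).toNat ≤ conjPart f 1 :=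
        (conj_galois f N hanti hN htn le_rfl).mpr hf1
      omega
    rw [hfa]
    omega
  · push_neg at h1
    have hex : ∃ b : ℕ, 1 ≤ b ∧ v < (b : ℤ) - 1 - conjPart f b := by
      refine ⟨v.toNat + 2 + conjPart f 1, by omega, ?_⟩
      have hm : conjPart f (v.toNat + 2 + conjPart f 1) ≤ conjPart f 1 :=
        conj_anti f N hanti hN le_rfl (by omega)
      have hvt : v ≤ (v.toNat : ℤ) := Int.self_le_toNat v
      push_cast
      omega
    set b := Nat.find hex with hbdef
    obtain ⟨hb1, hbv⟩ := Nat.find_spec hex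
    have hb2 : 2 ≤ b := by
      rcases Nat.lt_or_ge b 2 with h | h
      · interval_cases b
        · omega
        · exfalso
          have : (1 : ℤ) - 1 - conjPart f 1 = -(conjPart f 1 : ℤ) := by push_cast; ring
          rw [← hbdef] at hbv
          omega
      · exact h
    have hb'1 : 1 ≤ b - 1 := by omega
    have hng : ¬ (1 ≤ b - 1 ∧ v < ((b - 1 : ℕ) : ℤ) - 1 - conjPart f (b - 1)) :=
      Nat.find_min hex (by omega)
    have hle : ((b - 1 : ℕ) : ℤ) - 1 - conjPart f (b - 1) ≤ v := by
      by_contra h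
      exact hng ⟨hb'1, by omega⟩
    by_cases heq : ((b - 1 : ℕ) : ℤ) - 1 - conjPart f (b - 1) = v
    · right; exact ⟨b - 1, hb'1, heq⟩
    · left
      have hlt : ((b - 1 : ℕ) : ℤ) - 1 - conjPart f (b - 1) < v := lt_of_le_of_ne hle heq
      set cb' := conjPart f (b - 1) with hcb'
      set cb := conjPart f b with hcb
      have hmono : cb ≤ cb' := conj_anti f N hanti hN hb'1 (by omega)
      -- j := v - g(b-1), 1 ≤ j ≤ cb' - cb
      have hjpos : (1:ℤ) ≤ v - (((b-1:ℕ):ℤ) - 1 - cb') := by omega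
      have hcast : ((b - 1 : ℕ) : ℤ) = (b : ℤ) - 1 := by
        have : 1 ≤ b := by omega
        push_cast [this]
        ring
      have hjle : v - (((b-1:ℕ):ℤ) - 1 - cb') ≤ (cb' : ℤ) - cb := by
        -- from hbv : v < b - 1 - cb
        omega
      set j := (v - (((b-1:ℕ):ℤ) - 1 - cb')).toNat with hjdef
      have hjcast : (j : ℤ) = v - (((b-1:ℕ):ℤ) - 1 - cb') := Int.toNat_of_nonneg (by omega)
      have hj1 : 1 ≤ j := by omega
      have hjle' : j ≤ cb' - cb := by omega
      refine ⟨cb' + 1 - j, by omega, ?_⟩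
      have hfa : f (cb' + 1 - j) = b - 1 := by
        have hale : cb' + 1 - j ≤ cb' := by omega
        have ha1 : 1 ≤ cb' + 1 - j := by omega
        have h1' : b - 1 ≤ f (cb' + 1 - j) :=
          (conj_galois f N hanti hN ha1 hb'1).mp hale
        have h2' : ¬ (cb' + 1 - j ≤ cb) := by omega
        have h3' : ¬ (b ≤ f (cb' + 1 - j)) := by
          intro hc
          exact h2' ((conj_galois f N hanti hN ha1 (by omega)).mpr hc)
        omega
      rw [hfa]
      have : ((cb' + 1 - j : ℕ) : ℤ) = (cb' : ℤ) + 1 - j := by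
        push_cast [show j ≤ cb' + 1 by omega]
        ring
      omega


/-- Key combinatorial lemma: row values ⊎ (column values − 1) form an integer interval. -/
lemma maya_interval (mu : ℕ → ℕ) (M : ℕ)
    (hmua : ∀ a b, 1 ≤ a → a ≤ b → mu b ≤ mu a)
    (hmuM : ∀ a, M < a → mu a = 0)
    (r c : ℕ) (hr : 1 ≤ r) (hc : mu r < c) :
    Multiset.map (fun b : ℕ => (c : ℤ) + conjPart mu b - r - b) (Finset.Ioc (mu r) (c - 1)).val
        + Multiset.map (fun a : ℕ => (a : ℤ) + c - r - mu a - 1)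
            (((Finset.Icc 1 (r - 1)).filter (fun a => mu a < c)).val)
      = (Finset.Ico ((conjPart mu c : ℤ) - r + 1) ((c : ℤ) - 1 - mu r)).val := by
  classical
  have hc1 : 1 ≤ c := by omega
  -- nodup of the two mapped multisets
  have hnd1 : (Multiset.map (fun b : ℕ => (c : ℤ) + conjPart mu b - r - b)
      (Finset.Ioc (mu r) (c - 1)).val).Nodup := by
    refine Multiset.Nodup.map_on ?_ (Finset.Ioc (mu r) (c - 1)).nodup
    intro x hx y hy hxy
    rw [Finset.mem_val, Finset.mem_Ioc] at hx hy
    by_contra hne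
    rcases Nat.lt_or_ge x y with h | h
    · have := g_lt mu M hmua hmuM (show 1 ≤ x by omega) h
      omega
    · have hyx : y < x := by omega
      have := g_lt mu M hmua hmuM (show 1 ≤ y by omega) hyx
      omega
  have hnd2 : (Multiset.map (fun a : ℕ => (a : ℤ) + c - r - mu a - 1)
      (((Finset.Icc 1 (r - 1)).filter (fun a => mu a < c)).val)).Nodup := by
    refine Multiset.Nodup.map_on ?_ ((Finset.Icc 1 (r - 1)).filter (fun a => mu a < c)).nodup
    intro x hx y hy hxy
    rw [Finset.mem_val, Finset.mem_filter, Finset.mem_Icc] at hx hy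
    by_contra hne
    rcases Nat.lt_or_ge x y with h | h
    · have := q_lt mu hmua (show 1 ≤ x by omega) h
      omega
    · have hyx : y < x := by omega
      have := q_lt mu hmua (show 1 ≤ y by omega) hyx
      omega
  have hdisj : ∀ x : ℤ, x ∈
      Multiset.map (fun b : ℕ => (c : ℤ) + conjPart mu b - r - b)
        (Finset.Ioc (mu r) (c - 1)).val →
      x ∉ Multiset.map (fun a : ℕ => (a : ℤ) + c - r - mu a - 1)
        (((Finset.Icc 1 (r - 1)).filter (fun a => mu a < c)).val) := by
    intro x hx hy
    rw [Multiset.mem_map] at hx hy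
    obtain ⟨b, hb, hbx⟩ := hx
    obtain ⟨a, ha, hax⟩ := hy
    rw [Finset.mem_val, Finset.mem_Ioc] at hb
    rw [Finset.mem_val, Finset.mem_filter, Finset.mem_Icc] at ha
    have := maya_cases mu M hmua hmuM (show 1 ≤ a by omega) (show 1 ≤ b by omega)
    omega
  have hndL : (Multiset.map (fun b : ℕ => (c : ℤ) + conjPart mu b - r - b)
        (Finset.Ioc (mu r) (c - 1)).val
      + Multiset.map (fun a : ℕ => (a : ℤ) + c - r - mu a - 1)
        (((Finset.Icc 1 (r - 1)).filter (fun a => mu a < c)).val)).Nodup :=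
    Multiset.nodup_add.mpr ⟨hnd1, hnd2, Multiset.disjoint_left.mpr (fun {x} hx => hdisj x hx)⟩
  rw [Multiset.Nodup.ext hndL (Finset.Ico _ _).nodup]
  intro x
  rw [Multiset.mem_add, Finset.mem_val, Finset.mem_Ico]
  constructor
  · rintro (hx | hx)
    · rw [Multiset.mem_map] at hx
      obtain ⟨b, hb, hbx⟩ := hx
      rw [Finset.mem_val, Finset.mem_Ioc] at hb
      have hb1 : 1 ≤ b := by omega
      have hgc : (b : ℤ) - 1 - conjPart mu b < (c : ℤ) - 1 - conjPart mu c :=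
        g_lt mu M hmua hmuM hb1 (by omega)
      have := maya_cases mu M hmua hmuM hr hb1
      omega
    · rw [Multiset.mem_map] at hx
      obtain ⟨a, ha, hax⟩ := hx
      rw [Finset.mem_val, Finset.mem_filter, Finset.mem_Icc] at ha
      have ha1 : 1 ≤ a := ha.1.1
      have hqr : (mu r : ℤ) - r < (mu a : ℤ) - a := q_lt mu hmua ha1 (by omega)
      have := maya_cases mu M hmua hmuM ha1 hc1
      omega
  · rintro ⟨hxl, hxr⟩
    rcases maya_complete mu M hmua hmuM ((c : ℤ) - r - 1 - x) with ⟨a, ha1, haq⟩ | ⟨b, hb1, hbg⟩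
    · right
      rw [Multiset.mem_map]
      refine ⟨a, ?_, by omega⟩
      rw [Finset.mem_val, Finset.mem_filter, Finset.mem_Icc]
      have har : a < r := by
        by_contra hge
        push_neg at hge
        rcases Nat.lt_or_ge r a with h | h
        · have := q_lt mu hmua hr h
          omega
        · have : a = r := by omega
          subst this
          omega
      have hac : mu a < c := by
        rcases maya_cases mu M hmua hmuM ha1 hc1 with h | h
        · omega
        · omega
      exact ⟨⟨ha1, by omega⟩, hac⟩
    · left
      rw [Multiset.mem_map]
      refine ⟨b, ?_, by omega⟩
      rw [Finset.mem_val, Finset.mem_Ioc]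
      have hbc : b < c := by
        by_contra hge
        push_neg at hge
        rcases Nat.lt_or_ge c b with h | h
        · have := g_lt mu M hmua hmuM hc1 h
          omega
        · have : b = c := by omega
          subst this
          omega
      have hbr : mu r < b := by
        rcases maya_cases mu M hmua hmuM hr hb1 with h | h
        · omega
        · omega
      exact ⟨hbr, by omega⟩


lemma count_val (s : Finset ℤ) (x : ℤ) :
    Multiset.count x s.val = if x ∈ s then 1 else 0 := by
  by_cases h : x ∈ s
  · rw [if_pos h]
    exact Multiset.count_eq_one_of_mem s.nodup (Finset.mem_val.mpr h)
  · rw [if_neg h]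
    exact Multiset.count_eq_zero_of_notMem (fun hc => h (Finset.mem_val.mp hc))

lemma Ico_val_shift (α β : ℤ) :
    Multiset.map (fun y : ℤ => y + 1) (Finset.Ico α β).val
      = (Finset.Ico (α + 1) (β + 1)).val := by
  have h := Finset.map_add_right_Ico α β (1 : ℤ)
  rw [← h, Finset.map_val]
  apply Multiset.map_congr rfl
  intro y _
  simp [addRightEmbedding_apply]

lemma Ico_cons (α β : ℤ) (h : α ≤ β) :
    (Finset.Ico α β).val + {β} = (Finset.Ico (α + 1) (β + 1)).val + {α} := by
  apply Multiset.ext.mpr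
  intro x
  have h1 := count_val (Finset.Ico α β) x
  have h2 := count_val (Finset.Ico (α + 1) (β + 1)) x
  simp only [Multiset.count_add, Multiset.count_singleton, h1, h2, Finset.mem_Ico]
  split_ifs <;> omega


lemma main_aux (mu : ℕ → ℕ) (M L : ℕ)
    (hmua : ∀ a b, 1 ≤ a → a ≤ b → mu b ≤ mu a)
    (hmuM : ∀ a, M < a → mu a = 0) :
    ∀ (n : ℕ) (lam : ℕ → ℕ),
      (∀ a b, 1 ≤ a → a ≤ b → lam b ≤ lam a) →
      (∀ a, M < a → lam a = 0) →
      (∀ a, 1 ≤ a → lam a ≤ L) →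
      (Finset.Icc 1 M).sum lam = n →
      Multiset.map (fun p : ℕ × ℕ => -((mu p.1 : ℤ) + conjPart lam p.2 - p.1 - p.2 + 1))
          (((Finset.Icc 1 M ×ˢ Finset.Icc 1 L).filter
              fun p : ℕ × ℕ => mu p.1 < p.2 ∧ p.2 ≤ lam p.1).val) =
        Multiset.map (fun p : ℕ × ℕ => (lam p.1 : ℤ) + conjPart mu p.2 - p.1 - p.2 + 1)
          (((Finset.Icc 1 M ×ˢ Finset.Icc 1 L).filter
              fun p : ℕ × ℕ => mu p.1 < p.2 ∧ p.2 ≤ lam p.1).val) := by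
  intro n
  induction n with
  | zero =>
    intro lam hanti hsupp hbound hsum
    have hD : ((Finset.Icc 1 M ×ˢ Finset.Icc 1 L).filter
        fun p : ℕ × ℕ => mu p.1 < p.2 ∧ p.2 ≤ lam p.1) = ∅ := by
      apply Finset.eq_empty_of_forall_notMem
      intro p hp
      rw [Finset.mem_filter, Finset.mem_product, Finset.mem_Icc, Finset.mem_Icc] at hp
      have h0 : lam p.1 = 0 :=
        Finset.sum_eq_zero_iff.mp hsum p.1 (Finset.mem_Icc.mpr ⟨hp.1.1.1, hp.1.1.2⟩)
      omega
    rw [hD]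
    simp
  | succ n ih =>
    intro lam hanti hsupp hbound hsum
    classical
    -- choose the last nonzero row r
    have hne : ((Finset.Icc 1 M).filter (fun a => lam a ≠ 0)).Nonempty := by
      by_contra h
      rw [Finset.not_nonempty_iff_eq_empty] at h
      have hz : (Finset.Icc 1 M).sum lam = 0 := by
        apply Finset.sum_eq_zero
        intro a haI
        by_contra h0
        have hmem : a ∈ (Finset.Icc 1 M).filter (fun a => lam a ≠ 0) :=
          Finset.mem_filter.mpr ⟨haI, h0⟩
        rw [h] at hmem
        exact absurd hmem (Finset.notMem_empty a)
      omega
    set r := ((Finset.Icc 1 M).filter (fun a => lam a ≠ 0)).max' hne with hrdef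
    have hrmem := Finset.max'_mem _ hne
    rw [← hrdef, Finset.mem_filter, Finset.mem_Icc] at hrmem
    obtain ⟨⟨hr1, hrM⟩, hrne⟩ := hrmem
    have hrmax : ∀ a, r < a → lam a = 0 := by
      intro a hra
      by_cases haM : a ≤ M
      · by_contra h0
        have hmem : a ∈ (Finset.Icc 1 M).filter (fun a => lam a ≠ 0) :=
          Finset.mem_filter.mpr ⟨Finset.mem_Icc.mpr ⟨by omega, haM⟩, h0⟩
        have := Finset.le_max' _ a hmem
        omega
      · exact hsupp a (by omega)
    have hc1 : 1 ≤ lam r := Nat.one_le_iff_ne_zero.mpr hrne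
    set lam' : ℕ → ℕ := fun a => if a = r then lam r - 1 else lam a with hlamdef
    have hlam'r : lam' r = lam r - 1 := by simp [hlamdef]
    have hlam'ne : ∀ a, a ≠ r → lam' a = lam a := by
      intro a h; simp [hlamdef, h]
    have hlam'le : ∀ a, lam' a ≤ lam a := by
      intro a
      by_cases h : a = r
      · subst h; rw [hlam'r]; omega
      · rw [hlam'ne a h]
    have hanti' : ∀ a b, 1 ≤ a → a ≤ b → lam' b ≤ lam' a := by
      intro a b h1 hab
      by_cases hbr : b = r
      · by_cases har : a = r
        · rw [har, hbr]
        · rw [hbr, hlam'r, hlam'ne a har]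
          have := hanti a r h1 (by omega)
          omega
      · rw [hlam'ne b hbr]
        by_cases har : a = r
        · have hba : r < b := by omega
          rw [hrmax b hba]
          omega
        · rw [hlam'ne a har]
          exact hanti a b h1 hab
    have hsupp' : ∀ a, M < a → lam' a = 0 := by
      intro a ha
      rw [hlam'ne a (by omega)]
      exact hsupp a ha
    have hbound' : ∀ a, 1 ≤ a → lam' a ≤ L :=
      fun a ha => le_trans (hlam'le a) (hbound a ha)
    have hsum' : (Finset.Icc 1 M).sum lam' = n := by
      show ∑ x ∈ Finset.Icc 1 M, lam' x = n
      have hsum2 : ∑ x ∈ Finset.Icc 1 M, lam x = n + 1 := hsum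
      have hrIcc : r ∈ Finset.Icc 1 M := Finset.mem_Icc.mpr ⟨hr1, hrM⟩
      have h1 : ∑ x ∈ (Finset.Icc 1 M).erase r, lam' x
          = ∑ x ∈ (Finset.Icc 1 M).erase r, lam x :=
        Finset.sum_congr rfl (fun x hx => hlam'ne x (Finset.ne_of_mem_erase hx))
      have h2 := Finset.add_sum_erase (Finset.Icc 1 M) lam hrIcc
      have h3 := Finset.add_sum_erase (Finset.Icc 1 M) lam' hrIcc
      rw [hlam'r] at h3
      omega
    -- conjugate partition facts
    have hconj_c : conjPart lam (lam r) = r := by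
      rw [conjPart]
      have hset : {a : ℕ | 1 ≤ a ∧ lam r ≤ lam a} = Set.Icc 1 r := by
        ext a
        simp only [Set.mem_setOf_eq, Set.mem_Icc]
        constructor
        · rintro ⟨h1, h2⟩
          refine ⟨h1, ?_⟩
          by_contra hgt
          push_neg at hgt
          have := hrmax a hgt
          omega
        · rintro ⟨h1, h2⟩
          exact ⟨h1, hanti a r h1 h2⟩
      rw [hset, ← Finset.coe_Icc, Set.ncard_coe_finset, Nat.card_Icc]
      omega
    have hconj_c' : conjPart lam' (lam r) = r - 1 := by
      rw [conjPart]
      have hset : {a : ℕ | 1 ≤ a ∧ lam r ≤ lam' a} = Set.Icc 1 (r - 1) := by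
        ext a
        simp only [Set.mem_setOf_eq, Set.mem_Icc]
        constructor
        · rintro ⟨h1, h2⟩
          refine ⟨h1, ?_⟩
          have har : a ≠ r := by
            intro h
            rw [h, hlam'r] at h2
            omega
          by_contra hgt
          push_neg at hgt
          have hgt' : r < a := by omega
          have := hrmax a hgt'
          rw [hlam'ne a har] at h2
          omega
        · rintro ⟨h1, h2⟩
          have har : a ≠ r := by omega
          rw [hlam'ne a har]
          exact ⟨h1, hanti a r h1 (by omega)⟩
      rw [hset, ← Finset.coe_Icc, Set.ncard_coe_finset, Nat.card_Icc]
      omega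
    have hconj_other : ∀ b, b ≠ lam r → conjPart lam' b = conjPart lam b := by
      intro b hb
      rw [conjPart, conjPart]
      congr 1
      ext a
      simp only [Set.mem_setOf_eq]
      by_cases har : a = r
      · subst har
        rw [hlam'r]
        constructor
        · rintro ⟨h1, h2⟩; exact ⟨h1, by omega⟩
        · rintro ⟨h1, h2⟩
          refine ⟨h1, ?_⟩
          rcases Nat.lt_or_ge b (lam r) with h | h
          · omega
          · omega
      · rw [hlam'ne a har]
    have hIH := ih lam' hanti' hsupp' hbound' hsum'
    -- membership characterizations
    have hmemD' : ∀ p : ℕ × ℕ,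
        (p ∈ (Finset.Icc 1 M ×ˢ Finset.Icc 1 L).filter
          (fun p : ℕ × ℕ => mu p.1 < p.2 ∧ p.2 ≤ lam' p.1)) ↔
        (1 ≤ p.1 ∧ p.1 ≤ M ∧ mu p.1 < p.2 ∧ p.2 ≤ lam' p.1) := by
      intro p
      rw [Finset.mem_filter, Finset.mem_product, Finset.mem_Icc, Finset.mem_Icc]
      constructor
      · rintro ⟨⟨⟨h1, h2⟩, h3, h4⟩, h5, h6⟩
        exact ⟨h1, h2, h5, h6⟩
      · rintro ⟨h1, h2, h3, h4⟩
        have hp2L : p.2 ≤ L := le_trans h4 (le_trans (hlam'le p.1) (hbound p.1 h1))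
        exact ⟨⟨⟨h1, h2⟩, by omega, hp2L⟩, h3, h4⟩
    have hmemD : ∀ p : ℕ × ℕ,
        (p ∈ (Finset.Icc 1 M ×ˢ Finset.Icc 1 L).filter
          (fun p : ℕ × ℕ => mu p.1 < p.2 ∧ p.2 ≤ lam p.1)) ↔
        (1 ≤ p.1 ∧ p.1 ≤ M ∧ mu p.1 < p.2 ∧ p.2 ≤ lam p.1) := by
      intro p
      rw [Finset.mem_filter, Finset.mem_product, Finset.mem_Icc, Finset.mem_Icc]
      constructor
      · rintro ⟨⟨⟨h1, h2⟩, h3, h4⟩, h5, h6⟩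
        exact ⟨h1, h2, h5, h6⟩
      · rintro ⟨h1, h2, h3, h4⟩
        have hp2L : p.2 ≤ L := le_trans h4 (hbound p.1 h1)
        exact ⟨⟨⟨h1, h2⟩, by omega, hp2L⟩, h3, h4⟩
    set D := (Finset.Icc 1 M ×ˢ Finset.Icc 1 L).filter
        (fun p : ℕ × ℕ => mu p.1 < p.2 ∧ p.2 ≤ lam p.1) with hDdef
    set D' := (Finset.Icc 1 M ×ˢ Finset.Icc 1 L).filter
        (fun p : ℕ × ℕ => mu p.1 < p.2 ∧ p.2 ≤ lam' p.1) with hD'def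
    by_cases hcr : mu r < lam r
    · -- the new box (r, lam r) is in the skew diagram
      have hnotmem : (r, lam r) ∉ D' := by
        rw [hmemD']
        rintro ⟨h1, h2, h3, h4⟩
        rw [hlam'r] at h4
        omega
      have hDeq : D = insert (r, lam r) D' := by
        ext p
        rw [Finset.mem_insert, hmemD p, hmemD' p]
        constructor
        · rintro ⟨h1, h2, h3, h4⟩
          by_cases hp1 : p.1 = r
          · by_cases hp2 : p.2 = lam r
            · left; exact Prod.ext_iff.mpr ⟨hp1, hp2⟩
            · right
              refine ⟨h1, h2, h3, ?_⟩
              rw [hp1] at h4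
              rw [hp1, hlam'r]
              omega
          · right
            refine ⟨h1, h2, h3, ?_⟩
            rw [hlam'ne p.1 hp1]
            exact h4
        · rintro (rfl | ⟨h1, h2, h3, h4⟩)
          · exact ⟨hr1, hrM, hcr, le_rfl⟩
          · exact ⟨h1, h2, h3, le_trans h4 (hlam'le p.1)⟩
      have hDval : D.val = (r, lam r) ::ₘ D'.val := by
        rw [hDeq, Finset.insert_val,
          Multiset.ndinsert_of_notMem (fun h => hnotmem (Finset.mem_val.mp h))]
      -- filters by column lam r / row r
      set fc := D'.filter (fun p : ℕ × ℕ => p.2 = lam r) with hfcdef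
      set nc := D'.filter (fun p : ℕ × ℕ => ¬ p.2 = lam r) with hncdef
      set fr := D'.filter (fun p : ℕ × ℕ => p.1 = r) with hfrdef
      set nr := D'.filter (fun p : ℕ × ℕ => ¬ p.1 = r) with hnrdef
      have hsplitc : D'.val = fc.val + nc.val := by
        have h := Multiset.filter_add_not (fun p : ℕ × ℕ => p.2 = lam r) D'.val
        rw [hfcdef, hncdef, Finset.filter_val, Finset.filter_val]
        exact h.symm
      have hsplitr : D'.val = fr.val + nr.val := by
        have h := Multiset.filter_add_not (fun p : ℕ × ℕ => p.1 = r) D'.val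
        rw [hfrdef, hnrdef, Finset.filter_val, Finset.filter_val]
        exact h.symm
      have hfc_eq : fc = ((Finset.Icc 1 (r - 1)).filter (fun a => mu a < lam r)).map
          ⟨fun a => (a, lam r), fun x y h => by simpa using congrArg Prod.fst h⟩ := by
        ext p
        rw [hfcdef, Finset.mem_filter, hmemD' p, Finset.mem_map]
        constructor
        · rintro ⟨⟨h1, h2, h3, h4⟩, h5⟩
          refine ⟨p.1, ?_, ?_⟩
          · rw [Finset.mem_filter, Finset.mem_Icc]
            have hp1r : p.1 < r := by
              rcases Nat.lt_or_ge p.1 r with h | h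
              · exact h
              · exfalso
                rcases Nat.lt_or_ge r p.1 with h' | h'
                · have h0 := hrmax p.1 h'
                  rw [hlam'ne p.1 (by omega)] at h4
                  omega
                · have hpr : p.1 = r := by omega
                  rw [hpr, hlam'r] at h4
                  omega
            exact ⟨⟨h1, by omega⟩, by omega⟩
          · show (p.1, lam r) = p
            exact Prod.ext_iff.mpr ⟨rfl, h5.symm⟩
        · rintro ⟨a, ha, hpa⟩
          rw [Finset.mem_filter, Finset.mem_Icc] at ha
          obtain ⟨⟨ha1, har⟩, hac⟩ := ha
          change (a, lam r) = p at hpa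
          subst hpa
          refine ⟨⟨ha1, by omega, hac, ?_⟩, rfl⟩
          show lam r ≤ lam' a
          rw [hlam'ne a (by omega)]
          exact hanti a r ha1 (by omega)
      have hfr_eq : fr = (Finset.Ioc (mu r) (lam r - 1)).map
          ⟨fun b => (r, b), fun x y h => by simpa using congrArg Prod.snd h⟩ := by
        ext p
        rw [hfrdef, Finset.mem_filter, hmemD' p, Finset.mem_map]
        constructor
        · rintro ⟨⟨h1, h2, h3, h4⟩, h5⟩
          refine ⟨p.2, ?_, ?_⟩
          · rw [Finset.mem_Ioc]
            rw [h5] at h3 h4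
            rw [hlam'r] at h4
            exact ⟨h3, h4⟩
          · show (r, p.2) = p
            exact Prod.ext_iff.mpr ⟨h5.symm, rfl⟩
        · rintro ⟨b, hb, hpb⟩
          rw [Finset.mem_Ioc] at hb
          change (r, b) = p at hpb
          subst hpb
          refine ⟨⟨hr1, hrM, hb.1, ?_⟩, rfl⟩
          show b ≤ lam' r
          rw [hlam'r]
          exact hb.2
      -- pointwise map comparisons
      have hmap_fc : Multiset.map
            (fun p : ℕ × ℕ => -((mu p.1 : ℤ) + conjPart lam p.2 - p.1 - p.2 + 1)) fc.val
          = Multiset.map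
            (fun p : ℕ × ℕ => -((mu p.1 : ℤ) + conjPart lam' p.2 - p.1 - p.2 + 1) - 1) fc.val := by
        apply Multiset.map_congr rfl
        intro p hp
        have hp' : p.2 = lam r := by
          have hm := Finset.mem_val.mp hp
          rw [hfcdef, Finset.mem_filter] at hm
          exact hm.2
        rw [hp', hconj_c, hconj_c']
        omega
      have hmap_nc : Multiset.map
            (fun p : ℕ × ℕ => -((mu p.1 : ℤ) + conjPart lam p.2 - p.1 - p.2 + 1)) nc.val
          = Multiset.map
            (fun p : ℕ × ℕ => -((mu p.1 : ℤ) + conjPart lam' p.2 - p.1 - p.2 + 1)) nc.val := by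
        apply Multiset.map_congr rfl
        intro p hp
        have hp' : ¬ p.2 = lam r := by
          have hm := Finset.mem_val.mp hp
          rw [hncdef, Finset.mem_filter] at hm
          exact hm.2
        rw [hconj_other p.2 hp']
      have hmap_fr : Multiset.map
            (fun p : ℕ × ℕ => (lam p.1 : ℤ) + conjPart mu p.2 - p.1 - p.2 + 1) fr.val
          = Multiset.map
            (fun p : ℕ × ℕ => ((lam' p.1 : ℤ) + conjPart mu p.2 - p.1 - p.2 + 1) + 1) fr.val := by
        apply Multiset.map_congr rfl
        intro p hp
        have hp' : p.1 = r := by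
          have hm := Finset.mem_val.mp hp
          rw [hfrdef, Finset.mem_filter] at hm
          exact hm.2
        rw [hp', hlam'r]
        omega
      have hmap_nr : Multiset.map
            (fun p : ℕ × ℕ => (lam p.1 : ℤ) + conjPart mu p.2 - p.1 - p.2 + 1) nr.val
          = Multiset.map
            (fun p : ℕ × ℕ => (lam' p.1 : ℤ) + conjPart mu p.2 - p.1 - p.2 + 1) nr.val := by
        apply Multiset.map_congr rfl
        intro p hp
        have hp' : ¬ p.1 = r := by
          have hm := Finset.mem_val.mp hp
          rw [hnrdef, Finset.mem_filter] at hm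
          exact hm.2
        rw [hlam'ne p.1 hp']
      -- translate row/column values to the interval lemma
      have hAeq : Multiset.map
            (fun p : ℕ × ℕ => -((mu p.1 : ℤ) + conjPart lam' p.2 - p.1 - p.2 + 1) - 1) fc.val
          = Multiset.map (fun a : ℕ => (a : ℤ) + lam r - r - mu a - 1)
            (((Finset.Icc 1 (r - 1)).filter (fun a => mu a < lam r)).val) := by
        rw [hfc_eq, Finset.map_val, Multiset.map_map]
        apply Multiset.map_congr rfl
        intro a ha
        show -((mu a : ℤ) + conjPart lam' (lam r) - a - lam r + 1) - 1 = (a : ℤ) + lam r - r - mu a - 1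
        simp only [Function.comp_apply, Function.Embedding.coeFn_mk, hconj_c']
        omega
      have hBeq : Multiset.map
            (fun p : ℕ × ℕ => (lam' p.1 : ℤ) + conjPart mu p.2 - p.1 - p.2 + 1) fr.val
          = Multiset.map (fun b : ℕ => (lam r : ℤ) + conjPart mu b - r - b)
            (Finset.Ioc (mu r) (lam r - 1)).val := by
        rw [hfr_eq, Finset.map_val, Multiset.map_map]
        apply Multiset.map_congr rfl
        intro b hb
        show (lam' r : ℤ) + conjPart mu b - r - b + 1 = (lam r : ℤ) + conjPart mu b - r - b
        simp only [Function.comp_apply, Function.Embedding.coeFn_mk, hlam'r]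
        omega
      have hI : Multiset.map
            (fun p : ℕ × ℕ => (lam' p.1 : ℤ) + conjPart mu p.2 - p.1 - p.2 + 1) fr.val
          + Multiset.map
            (fun p : ℕ × ℕ => -((mu p.1 : ℤ) + conjPart lam' p.2 - p.1 - p.2 + 1) - 1) fc.val
          = (Finset.Ico ((conjPart mu (lam r) : ℤ) - r + 1) ((lam r : ℤ) - 1 - mu r)).val := by
        rw [hBeq, hAeq]
        exact maya_interval mu M hmua hmuM r (lam r) hr1 hcr
      have hmuc_lt : conjPart mu (lam r) < r := by
        have hg := conj_galois mu M hmua hmuM (a := r) (b := lam r) hr1 hc1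
        by_contra hge
        push_neg at hge
        have := hg.mp hge
        omega
      have e1 : Multiset.map
            (fun p : ℕ × ℕ => -((mu p.1 : ℤ) + conjPart lam' p.2 - p.1 - p.2 + 1)) fc.val
          = Multiset.map (fun y : ℤ => y + 1) (Multiset.map
            (fun p : ℕ × ℕ => -((mu p.1 : ℤ) + conjPart lam' p.2 - p.1 - p.2 + 1) - 1) fc.val) := by
        rw [Multiset.map_map]
        apply Multiset.map_congr rfl
        intro p _
        simp only [Function.comp_apply]
        ring
      have e2 : Multiset.map
            (fun p : ℕ × ℕ => ((lam' p.1 : ℤ) + conjPart mu p.2 - p.1 - p.2 + 1) + 1) fr.val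
          = Multiset.map (fun y : ℤ => y + 1) (Multiset.map
            (fun p : ℕ × ℕ => (lam' p.1 : ℤ) + conjPart mu p.2 - p.1 - p.2 + 1) fr.val) := by
        rw [Multiset.map_map]
        apply Multiset.map_congr rfl
        intro p _
        simp only [Function.comp_apply]
      have hshift : Multiset.map
            (fun p : ℕ × ℕ => -((mu p.1 : ℤ) + conjPart lam' p.2 - p.1 - p.2 + 1)) fc.val
          + Multiset.map
            (fun p : ℕ × ℕ => ((lam' p.1 : ℤ) + conjPart mu p.2 - p.1 - p.2 + 1) + 1) fr.val
          = (Finset.Ico ((conjPart mu (lam r) : ℤ) - r + 1 + 1) ((lam r : ℤ) - 1 - mu r + 1)).val := by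
        rw [e1, e2, ← Multiset.map_add, add_comm
          (Multiset.map
            (fun p : ℕ × ℕ => -((mu p.1 : ℤ) + conjPart lam' p.2 - p.1 - p.2 + 1) - 1) fc.val)
          (Multiset.map
            (fun p : ℕ × ℕ => (lam' p.1 : ℤ) + conjPart mu p.2 - p.1 - p.2 + 1) fr.val),
          hI, Ico_val_shift]
      have hstar : Multiset.map
            (fun p : ℕ × ℕ => -((mu p.1 : ℤ) + conjPart lam' p.2 - p.1 - p.2 + 1) - 1) fc.val
          + Multiset.map
            (fun p : ℕ × ℕ => (lam' p.1 : ℤ) + conjPart mu p.2 - p.1 - p.2 + 1) fr.val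
          + {(lam r : ℤ) - 1 - mu r}
          = Multiset.map
            (fun p : ℕ × ℕ => ((lam' p.1 : ℤ) + conjPart mu p.2 - p.1 - p.2 + 1) + 1) fr.val
          + Multiset.map
            (fun p : ℕ × ℕ => -((mu p.1 : ℤ) + conjPart lam' p.2 - p.1 - p.2 + 1)) fc.val
          + {(conjPart mu (lam r) : ℤ) - r + 1} := by
        rw [add_comm
          (Multiset.map
            (fun p : ℕ × ℕ => -((mu p.1 : ℤ) + conjPart lam' p.2 - p.1 - p.2 + 1) - 1) fc.val)
          (Multiset.map
            (fun p : ℕ × ℕ => (lam' p.1 : ℤ) + conjPart mu p.2 - p.1 - p.2 + 1) fr.val),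
          hI, add_comm
          (Multiset.map
            (fun p : ℕ × ℕ => ((lam' p.1 : ℤ) + conjPart mu p.2 - p.1 - p.2 + 1) + 1) fr.val)
          (Multiset.map
            (fun p : ℕ × ℕ => -((mu p.1 : ℤ) + conjPart lam' p.2 - p.1 - p.2 + 1)) fc.val),
          hshift]
        exact Ico_cons _ _ (by omega)
      have hIH2 : Multiset.map
            (fun p : ℕ × ℕ => -((mu p.1 : ℤ) + conjPart lam' p.2 - p.1 - p.2 + 1)) fc.val
          + Multiset.map
            (fun p : ℕ × ℕ => -((mu p.1 : ℤ) + conjPart lam' p.2 - p.1 - p.2 + 1)) nc.val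
          = Multiset.map
            (fun p : ℕ × ℕ => (lam' p.1 : ℤ) + conjPart mu p.2 - p.1 - p.2 + 1) fr.val
          + Multiset.map
            (fun p : ℕ × ℕ => (lam' p.1 : ℤ) + conjPart mu p.2 - p.1 - p.2 + 1) nr.val := by
        rw [← Multiset.map_add, ← hsplitc, hIH, hsplitr, Multiset.map_add]
      have hL1 : Multiset.map
            (fun p : ℕ × ℕ => -((mu p.1 : ℤ) + conjPart lam p.2 - p.1 - p.2 + 1)) D'.val
          = Multiset.map
            (fun p : ℕ × ℕ => -((mu p.1 : ℤ) + conjPart lam' p.2 - p.1 - p.2 + 1) - 1) fc.val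
          + Multiset.map
            (fun p : ℕ × ℕ => -((mu p.1 : ℤ) + conjPart lam' p.2 - p.1 - p.2 + 1)) nc.val := by
        rw [hsplitc, Multiset.map_add, hmap_fc, hmap_nc]
      have hR1 : Multiset.map
            (fun p : ℕ × ℕ => (lam p.1 : ℤ) + conjPart mu p.2 - p.1 - p.2 + 1) D'.val
          = Multiset.map
            (fun p : ℕ × ℕ => ((lam' p.1 : ℤ) + conjPart mu p.2 - p.1 - p.2 + 1) + 1) fr.val
          + Multiset.map
            (fun p : ℕ × ℕ => (lam' p.1 : ℤ) + conjPart mu p.2 - p.1 - p.2 + 1) nr.val := by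
        rw [hsplitr, Multiset.map_add, hmap_fr, hmap_nr]
      have hx1 : -((mu (r, lam r).1 : ℤ) + (conjPart lam (r, lam r).2 : ℤ)
            - ((r, lam r).1 : ℤ) - ((r, lam r).2 : ℤ) + 1)
          = (lam r : ℤ) - 1 - mu r := by
        show -((mu r : ℤ) + (conjPart lam (lam r) : ℤ) - (r : ℤ) - (lam r : ℤ) + 1)
            = (lam r : ℤ) - 1 - mu r
        rw [hconj_c]
        ring
      have hx2 : (lam (r, lam r).1 : ℤ) + (conjPart mu (r, lam r).2 : ℤ)
            - ((r, lam r).1 : ℤ) - ((r, lam r).2 : ℤ) + 1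
          = (conjPart mu (lam r) : ℤ) - r + 1 := by
        show (lam r : ℤ) + (conjPart mu (lam r) : ℤ) - (r : ℤ) - (lam r : ℤ) + 1
            = (conjPart mu (lam r) : ℤ) - r + 1
        ring
      rw [hDval, Multiset.map_cons, Multiset.map_cons, hx1, hx2, hL1, hR1]
      apply Multiset.ext.mpr
      intro x
      have c1 := congrArg (Multiset.count x) hstar
      have c2 := congrArg (Multiset.count x) hIH2
      simp only [Multiset.count_add, Multiset.count_cons, Multiset.count_singleton] at c1 c2 ⊢
      split_ifs at c1 c2 ⊢ <;> omega
    · -- no new box: the skew diagrams coincide and values are unchanged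
      have hp2ne : ∀ p : ℕ × ℕ, p ∈ D' → ¬ p.2 = lam r := by
        intro p hp hpe
        rw [hmemD' p] at hp
        obtain ⟨h1, h2, h3, h4⟩ := hp
        have hgt : r < p.1 := by
          by_contra hle
          push_neg at hle
          have := hmua p.1 r h1 hle
          omega
        have h0 : lam p.1 = 0 := hrmax p.1 hgt
        rw [hlam'ne p.1 (by omega), h0] at h4
        omega
      have hp1ne : ∀ p : ℕ × ℕ, p ∈ D' → ¬ p.1 = r := by
        intro p hp hpe
        rw [hmemD' p] at hp
        obtain ⟨h1, h2, h3, h4⟩ := hp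
        rw [hpe] at h3 h4
        rw [hlam'r] at h4
        omega
      have hDeq : D = D' := by
        ext p
        rw [hmemD p, hmemD' p]
        constructor
        · rintro ⟨h1, h2, h3, h4⟩
          refine ⟨h1, h2, h3, ?_⟩
          by_cases hp1 : p.1 = r
          · exfalso
            rw [hp1] at h3 h4
            omega
          · rw [hlam'ne p.1 hp1]
            exact h4
        · rintro ⟨h1, h2, h3, h4⟩
          exact ⟨h1, h2, h3, le_trans h4 (hlam'le p.1)⟩
      rw [hDeq]
      calc Multiset.map
            (fun p : ℕ × ℕ => -((mu p.1 : ℤ) + conjPart lam p.2 - p.1 - p.2 + 1)) D'.val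
          = Multiset.map
            (fun p : ℕ × ℕ => -((mu p.1 : ℤ) + conjPart lam' p.2 - p.1 - p.2 + 1)) D'.val :=
            Multiset.map_congr rfl (fun p hp => by
              rw [hconj_other p.2 (hp2ne p (Finset.mem_val.mp hp))])
        _ = Multiset.map
            (fun p : ℕ × ℕ => (lam' p.1 : ℤ) + conjPart mu p.2 - p.1 - p.2 + 1) D'.val := hIH
        _ = Multiset.map
            (fun p : ℕ × ℕ => (lam p.1 : ℤ) + conjPart mu p.2 - p.1 - p.2 + 1) D'.val :=
            Multiset.map_congr rfl (fun p hp => by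
              rw [hlam'ne p.1 (hp1ne p (Finset.mem_val.mp hp))])

end SkewAux

/-- Proposition 4.7: over the skew diagram
`{(a,b) : 1 ≤ a, μ_a < b ≤ λ_a}`, the multiset of the integers
`−(μ_a + λ*_b − a − b + 1)` coincides with the multiset of the integers
`λ_a + μ*_b − a − b + 1`; equivalently, the product of the fractions
`⟨−(μ_a + λ*_b − a − b + 1)⟩ / ⟨λ_a + μ*_b − a − b + 1⟩` (with
`⟨c⟩ = t − q^{2c}`) over these nodes equals `1`. -/
theorem skew_mixed_hook_multiset_eq (lam mu : ℕ → ℕ) (N : ℕ)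
    (hlam_anti : ∀ a b, 1 ≤ a → a ≤ b → lam b ≤ lam a)
    (hmu_anti : ∀ a b, 1 ≤ a → a ≤ b → mu b ≤ mu a)
    (hlamN : ∀ a, N < a → lam a = 0)
    (hmuN : ∀ a, N < a → mu a = 0) :
    Multiset.map
        (fun p : ℕ × ℕ =>
          -((mu p.1 : ℤ) + conjPart lam p.2 - p.1 - p.2 + 1))
        (((Finset.Icc 1 N ×ˢ Finset.Icc 1 (lam 1)).filter
            fun p : ℕ × ℕ => mu p.1 < p.2 ∧ p.2 ≤ lam p.1).val) =
      Multiset.map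
        (fun p : ℕ × ℕ =>
          (lam p.1 : ℤ) + conjPart mu p.2 - p.1 - p.2 + 1)
        (((Finset.Icc 1 N ×ˢ Finset.Icc 1 (lam 1)).filter
            fun p : ℕ × ℕ => mu p.1 < p.2 ∧ p.2 ≤ lam p.1).val) := by
  exact SkewAux.main_aux mu N (lam 1) hmu_anti hmuN ((Finset.Icc 1 N).sum lam) lam
    hlam_anti hlamN (fun a ha => hlam_anti 1 a le_rfl ha) rfl
end

section
/- For a partition λ of l, the element h_λ(q) = ∏_{(a,b)∈λ} (1 − q^{2(λ_a + λ*_b − a − b + 1)})/(1 − q^2) · q^{λ_1(1−λ_1) + λ_2(1−λ_2) + …} equals the alternative expression ∏_{(a,b)∈λ} (1 − q^{−2(λ_a + λ*_b − a − b + 1)})/(1 − q^{−2}) · q^{λ*_1(λ*_1−1) + λ*_2(λ*_2−1) + …}. -/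
/-- The hook length `λ_a + λ*_b − a − b + 1` of the node `p = (a,b)`. -/
noncomputable def hookLen (lam : ℕ → ℕ) (p : ℕ × ℕ) : ℤ :=
  (lam p.1 : ℤ) + conjPart lam p.2 - p.1 - p.2 + 1

section Aux
variable (lam : ℕ → ℕ) (N : ℕ)

lemma gauss_odd (m : ℕ) : ∑ b ∈ Finset.Icc 1 m, (2*(b:ℤ) - 1) = (m:ℤ)^2 := by
  induction m with
  | zero => simp
  | succ m ih =>
    rw [Finset.sum_Icc_succ_top (by omega), ih]
    push_cast; ring

lemma dc_eq_Icc (s : Finset ℕ) (h1 : ∀ a ∈ s, 1 ≤ a)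
    (hdc : ∀ a ∈ s, ∀ a', 1 ≤ a' → a' ≤ a → a' ∈ s) :
    s = Finset.Icc 1 s.card := by
  rcases s.eq_empty_or_nonempty with h | h
  · simp [h]
  · have hmax := s.max'_mem h
    have hs : s = Finset.Icc 1 (s.max' h) := by
      ext a
      simp only [Finset.mem_Icc]
      constructor
      · intro ha; exact ⟨h1 a ha, s.le_max' a ha⟩
      · intro ⟨ha1, ha2⟩; exact hdc _ hmax a ha1 ha2
    rw [hs, Nat.card_Icc]
    congr 1

lemma conj_card (hN : ∀ a, N < a → lam a = 0) {b : ℕ} (hb : 1 ≤ b) :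
    conjPart lam b = ((Finset.Icc 1 N).filter (fun a => b ≤ lam a)).card := by
  rw [conjPart]
  have : {a : ℕ | 1 ≤ a ∧ b ≤ lam a}
      = ↑((Finset.Icc 1 N).filter (fun a => b ≤ lam a)) := by
    ext a
    simp only [Set.mem_setOf_eq, Finset.coe_filter, Finset.mem_Icc]
    constructor
    · rintro ⟨h1, h2⟩
      refine ⟨⟨h1, ?_⟩, h2⟩
      by_contra hcon
      have := hN a (by omega)
      omega
    · rintro ⟨⟨h1, _⟩, h2⟩; exact ⟨h1, h2⟩
  rw [this, Set.ncard_coe_finset]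

lemma filter_col (hanti : ∀ a b, 1 ≤ a → a ≤ b → lam b ≤ lam a)
    (hN : ∀ a, N < a → lam a = 0) {b : ℕ} (hb : 1 ≤ b) :
    (Finset.Icc 1 N).filter (fun a => b ≤ lam a)
      = Finset.Icc 1 (conjPart lam b) := by
  rw [conj_card lam N hN hb]
  apply dc_eq_Icc
  · intro a ha; simp only [Finset.mem_filter, Finset.mem_Icc] at ha; exact ha.1.1
  · intro a ha a' h1 h2
    simp only [Finset.mem_filter, Finset.mem_Icc] at ha ⊢
    exact ⟨⟨h1, le_trans h2 ha.1.2⟩, le_trans ha.2 (hanti a' a h1 h2)⟩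

lemma filter_row (hanti : ∀ a b, 1 ≤ a → a ≤ b → lam b ≤ lam a) {a : ℕ} (ha : 1 ≤ a) :
    (Finset.Icc 1 (lam 1)).filter (fun b => b ≤ lam a) = Finset.Icc 1 (lam a) := by
  have := hanti 1 a le_rfl ha
  ext b
  simp only [Finset.mem_filter, Finset.mem_Icc]
  omega

lemma sum_row (hanti : ∀ a b, 1 ≤ a → a ≤ b → lam b ≤ lam a)
    {M : Type*} [AddCommMonoid M] (F : ℕ × ℕ → M) :
    ∑ p ∈ (Finset.Icc 1 N ×ˢ Finset.Icc 1 (lam 1)).filter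
        (fun p : ℕ × ℕ => p.2 ≤ lam p.1), F p
      = ∑ a ∈ Finset.Icc 1 N, ∑ b ∈ Finset.Icc 1 (lam a), F (a, b) := by
  rw [Finset.sum_filter, Finset.sum_product]
  refine Finset.sum_congr rfl (fun a ha => ?_)
  rw [← Finset.sum_filter, filter_row lam hanti (Finset.mem_Icc.mp ha).1]

lemma sum_col (hanti : ∀ a b, 1 ≤ a → a ≤ b → lam b ≤ lam a)
    (hN : ∀ a, N < a → lam a = 0) {M : Type*} [AddCommMonoid M] (F : ℕ × ℕ → M) :
    ∑ p ∈ (Finset.Icc 1 N ×ˢ Finset.Icc 1 (lam 1)).filter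
        (fun p : ℕ × ℕ => p.2 ≤ lam p.1), F p
      = ∑ b ∈ Finset.Icc 1 (lam 1), ∑ a ∈ Finset.Icc 1 (conjPart lam b), F (a, b) := by
  rw [Finset.sum_filter, Finset.sum_product_right]
  refine Finset.sum_congr rfl (fun b hb => ?_)
  rw [← Finset.sum_filter, filter_col lam N hanti hN (Finset.mem_Icc.mp hb).1]

lemma expo_identity (hanti : ∀ a b, 1 ≤ a → a ≤ b → lam b ≤ lam a)
    (hN : ∀ a, N < a → lam a = 0) :
    ∑ a ∈ Finset.Icc 1 N, (lam a : ℤ) * (1 - (lam a : ℤ))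
      = (∑ p ∈ (Finset.Icc 1 N ×ˢ Finset.Icc 1 (lam 1)).filter
          (fun p : ℕ × ℕ => p.2 ≤ lam p.1), (2 - 2 * hookLen lam p))
        + ∑ b ∈ Finset.Icc 1 (lam 1),
            (conjPart lam b : ℤ) * ((conjPart lam b : ℤ) - 1) := by
  have hS1 : ∑ p ∈ (Finset.Icc 1 N ×ˢ Finset.Icc 1 (lam 1)).filter
        (fun p : ℕ × ℕ => p.2 ≤ lam p.1),
        (2*(p.2:ℤ) - 1 - 2*(lam p.1 : ℤ))
      = ∑ a ∈ Finset.Icc 1 N, (-(lam a : ℤ)^2) := by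
    rw [sum_row lam N hanti]
    refine Finset.sum_congr rfl (fun a _ => ?_)
    show ∑ b ∈ Finset.Icc 1 (lam a), (2*(b:ℤ) - 1 - 2*(lam a : ℤ)) = -(lam a : ℤ)^2
    rw [Finset.sum_sub_distrib, gauss_odd, Finset.sum_const, Nat.card_Icc]
    simp only [nsmul_eq_mul]
    push_cast; ring
  have hS2 : ∑ p ∈ (Finset.Icc 1 N ×ˢ Finset.Icc 1 (lam 1)).filter
        (fun p : ℕ × ℕ => p.2 ≤ lam p.1),
        (2*(p.1:ℤ) - 1 - 2*(conjPart lam p.2 : ℤ))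
      = ∑ b ∈ Finset.Icc 1 (lam 1), (-(conjPart lam b : ℤ)^2) := by
    rw [sum_col lam N hanti hN]
    refine Finset.sum_congr rfl (fun b _ => ?_)
    show ∑ a ∈ Finset.Icc 1 (conjPart lam b), (2*(a:ℤ) - 1 - 2*(conjPart lam b : ℤ))
        = -(conjPart lam b : ℤ)^2
    rw [Finset.sum_sub_distrib, gauss_odd, Finset.sum_const, Nat.card_Icc]
    simp only [nsmul_eq_mul]
    push_cast; ring
  have hS3 : ∑ p ∈ (Finset.Icc 1 N ×ˢ Finset.Icc 1 (lam 1)).filter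
        (fun p : ℕ × ℕ => p.2 ≤ lam p.1), (2:ℤ)
      = ∑ a ∈ Finset.Icc 1 N, 2*(lam a : ℤ) := by
    rw [sum_row lam N hanti]
    refine Finset.sum_congr rfl (fun a _ => ?_)
    rw [Finset.sum_const, Nat.card_Icc]
    simp only [nsmul_eq_mul]
    push_cast; ring
  have hS4 : ∑ p ∈ (Finset.Icc 1 N ×ˢ Finset.Icc 1 (lam 1)).filter
        (fun p : ℕ × ℕ => p.2 ≤ lam p.1), (1:ℤ)
      = ∑ a ∈ Finset.Icc 1 N, (lam a : ℤ) := by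
    rw [sum_row lam N hanti]
    refine Finset.sum_congr rfl (fun a _ => ?_)
    rw [Finset.sum_const, Nat.card_Icc]
    simp
  have hS5 : ∑ p ∈ (Finset.Icc 1 N ×ˢ Finset.Icc 1 (lam 1)).filter
        (fun p : ℕ × ℕ => p.2 ≤ lam p.1), (1:ℤ)
      = ∑ b ∈ Finset.Icc 1 (lam 1), (conjPart lam b : ℤ) := by
    rw [sum_col lam N hanti hN]
    refine Finset.sum_congr rfl (fun b _ => ?_)
    rw [Finset.sum_const, Nat.card_Icc]
    simp
  have hsplit : ∑ p ∈ (Finset.Icc 1 N ×ˢ Finset.Icc 1 (lam 1)).filter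
        (fun p : ℕ × ℕ => p.2 ≤ lam p.1), (2 - 2 * hookLen lam p)
      = (∑ p ∈ (Finset.Icc 1 N ×ˢ Finset.Icc 1 (lam 1)).filter
          (fun p : ℕ × ℕ => p.2 ≤ lam p.1),
          (2*(p.2:ℤ) - 1 - 2*(lam p.1 : ℤ)))
        + (∑ p ∈ (Finset.Icc 1 N ×ˢ Finset.Icc 1 (lam 1)).filter
            (fun p : ℕ × ℕ => p.2 ≤ lam p.1),
            (2*(p.1:ℤ) - 1 - 2*(conjPart lam p.2 : ℤ)))
        + (∑ p ∈ (Finset.Icc 1 N ×ˢ Finset.Icc 1 (lam 1)).filter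
            (fun p : ℕ × ℕ => p.2 ≤ lam p.1), (2:ℤ)) := by
    rw [← Finset.sum_add_distrib, ← Finset.sum_add_distrib]
    refine Finset.sum_congr rfl (fun p _ => ?_)
    simp only [hookLen]; ring
  have hmul : ∑ b ∈ Finset.Icc 1 (lam 1),
      (conjPart lam b : ℤ) * ((conjPart lam b : ℤ) - 1)
      = (∑ b ∈ Finset.Icc 1 (lam 1), (conjPart lam b : ℤ)^2)
        - ∑ b ∈ Finset.Icc 1 (lam 1), (conjPart lam b : ℤ) := by
    rw [← Finset.sum_sub_distrib]
    exact Finset.sum_congr rfl (fun b _ => by ring)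
  have hmul2 : ∑ a ∈ Finset.Icc 1 N, (lam a : ℤ) * (1 - (lam a : ℤ))
      = (∑ a ∈ Finset.Icc 1 N, (lam a : ℤ))
        - ∑ a ∈ Finset.Icc 1 N, (lam a : ℤ)^2 := by
    rw [← Finset.sum_sub_distrib]
    exact Finset.sum_congr rfl (fun a _ => by ring)
  have hneg : ∀ (s : Finset ℕ) (g : ℕ → ℤ), ∑ x ∈ s, (-(g x)^2) = -∑ x ∈ s, (g x)^2 := by
    intro s g; rw [← Finset.sum_neg_distrib]
  have hS3' : ∑ a ∈ Finset.Icc 1 N, 2*(lam a : ℤ)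
      = 2 * ∑ a ∈ Finset.Icc 1 N, (lam a : ℤ) := by
    rw [Finset.mul_sum]
  rw [hsplit, hS1, hS2, hS3, hS3', hmul, hmul2, hneg, hneg]
  have h45 := hS4.symm.trans hS5
  linarith [h45]

end Aux

section RF
open RatFunc

lemma ratfunc_X_zpow_two_ne_one : (RatFunc.X : RatFunc ℂ) ^ (2:ℤ) ≠ 1 := by
  intro h
  rw [show (2:ℤ) = ((2:ℕ):ℤ) by norm_num, zpow_natCast] at h
  have := RatFunc.algebraMap_injective ℂ
    (a₁ := Polynomial.X ^ 2) (a₂ := 1)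
    (by rw [map_pow, map_one, RatFunc.algebraMap_X, h])
  have hdeg := congrArg Polynomial.natDegree this
  simp [Polynomial.natDegree_X_pow] at hdeg

lemma zpow_sum_eq_prod {ι : Type*} (a : RatFunc ℂ) (ha : a ≠ 0) (s : Finset ι)
    (f : ι → ℤ) : a ^ (∑ i ∈ s, f i) = ∏ i ∈ s, a ^ (f i) := by
  classical
  induction s using Finset.induction_on with
  | empty => simp
  | insert _ _ hx ih =>
    rw [Finset.sum_insert hx, Finset.prod_insert hx, zpow_add₀ ha, ih]

lemma factor_eq (h : ℤ) :
    (1 - (RatFunc.X : RatFunc ℂ) ^ (-(2 * h))) /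
        (1 - (RatFunc.X : RatFunc ℂ) ^ (-2 : ℤ))
      = (RatFunc.X : RatFunc ℂ) ^ (2 - 2 * h) *
        ((1 - (RatFunc.X : RatFunc ℂ) ^ (2 * h)) /
          (1 - (RatFunc.X : RatFunc ℂ) ^ (2 : ℤ))) := by
  have hq : (RatFunc.X : RatFunc ℂ) ≠ 0 := RatFunc.X_ne_zero
  have hu : (RatFunc.X : RatFunc ℂ) ^ (2 * h) ≠ 0 := zpow_ne_zero _ hq
  have hv : (RatFunc.X : RatFunc ℂ) ^ (2 : ℤ) ≠ 0 := zpow_ne_zero _ hq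
  have h1 : (1 : RatFunc ℂ) - RatFunc.X ^ (2:ℤ) ≠ 0 :=
    sub_ne_zero.mpr (Ne.symm ratfunc_X_zpow_two_ne_one)
  have h2 : (1 : RatFunc ℂ) - RatFunc.X ^ (-2:ℤ) ≠ 0 := by
    rw [show ((-2:ℤ)) = -(2:ℤ) by norm_num, zpow_neg]
    refine sub_ne_zero.mpr (fun hcon => ?_)
    rw [eq_comm, inv_eq_one] at hcon
    exact ratfunc_X_zpow_two_ne_one hcon
  have hsub : (RatFunc.X : RatFunc ℂ) ^ (2 - 2 * h)
      = RatFunc.X ^ (2:ℤ) / RatFunc.X ^ (2 * h) := zpow_sub₀ hq 2 (2*h)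
  rw [hsub, zpow_neg, show ((-2:ℤ)) = -(2:ℤ) by norm_num, zpow_neg]
  set u := (RatFunc.X : RatFunc ℂ) ^ (2 * h) with hud
  set v := (RatFunc.X : RatFunc ℂ) ^ (2 : ℤ) with hvd
  have e1 : (1 : RatFunc ℂ) - u⁻¹ = u⁻¹ * (u - 1) := by
    rw [mul_sub, inv_mul_cancel₀ hu, mul_one]
  have e2 : (1 : RatFunc ℂ) - v⁻¹ = v⁻¹ * (v - 1) := by
    rw [mul_sub, inv_mul_cancel₀ hv, mul_one]
  calc (1 - u⁻¹) / (1 - v⁻¹) = (u⁻¹ * (u - 1)) / (v⁻¹ * (v - 1)) := by rw [e1, e2]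
    _ = (u⁻¹ / v⁻¹) * ((u - 1) / (v - 1)) := mul_div_mul_comm _ _ _ _
    _ = (v / u) * ((1 - u) / (1 - v)) := by
        rw [inv_div_inv, show (1 : RatFunc ℂ) - u = -(u - 1) by ring,
          show (1 : RatFunc ℂ) - v = -(v - 1) by ring]
        rw [show -(u - 1) / -(v - 1) = (u - 1) / (v - 1) from neg_div_neg_eq _ _]

end RF

/-- the two expressions for `h_λ(q)`,
`∏_{(a,b)∈λ} (1 − q^{2h(a,b)})/(1 − q²) · q^{∑_a λ_a(1−λ_a)}` and
`∏_{(a,b)∈λ} (1 − q^{−2h(a,b)})/(1 − q^{−2}) · q^{∑_b λ*_b(λ*_b−1)}`,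
agree in `ℂ(q)` (here `q = RatFunc.X`). -/
theorem hecke_hook_scalar_two_expressions (lam : ℕ → ℕ) (N : ℕ)
    (hanti : ∀ a b, 1 ≤ a → a ≤ b → lam b ≤ lam a)
    (hN : ∀ a, N < a → lam a = 0) :
    (∏ p ∈ (Finset.Icc 1 N ×ˢ Finset.Icc 1 (lam 1)).filter
        (fun p : ℕ × ℕ => p.2 ≤ lam p.1),
        (1 - (RatFunc.X : RatFunc ℂ) ^ (2 * hookLen lam p)) /
          (1 - (RatFunc.X : RatFunc ℂ) ^ (2 : ℤ))) *
      (RatFunc.X : RatFunc ℂ) ^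
        (∑ a ∈ Finset.Icc 1 N, (lam a : ℤ) * (1 - (lam a : ℤ))) =
    (∏ p ∈ (Finset.Icc 1 N ×ˢ Finset.Icc 1 (lam 1)).filter
        (fun p : ℕ × ℕ => p.2 ≤ lam p.1),
        (1 - (RatFunc.X : RatFunc ℂ) ^ (-(2 * hookLen lam p))) /
          (1 - (RatFunc.X : RatFunc ℂ) ^ (-2 : ℤ))) *
      (RatFunc.X : RatFunc ℂ) ^
        (∑ b ∈ Finset.Icc 1 (lam 1),
          (conjPart lam b : ℤ) * ((conjPart lam b : ℤ) - 1)) := by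
  have hq : (RatFunc.X : RatFunc ℂ) ≠ 0 := RatFunc.X_ne_zero
  set T := (Finset.Icc 1 N ×ˢ Finset.Icc 1 (lam 1)).filter
      (fun p : ℕ × ℕ => p.2 ≤ lam p.1) with hT
  have hprod : ∏ p ∈ T,
      (1 - (RatFunc.X : RatFunc ℂ) ^ (-(2 * hookLen lam p))) /
        (1 - (RatFunc.X : RatFunc ℂ) ^ (-2 : ℤ))
      = (RatFunc.X : RatFunc ℂ) ^ (∑ p ∈ T, (2 - 2 * hookLen lam p)) *
        ∏ p ∈ T, (1 - (RatFunc.X : RatFunc ℂ) ^ (2 * hookLen lam p)) /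
          (1 - (RatFunc.X : RatFunc ℂ) ^ (2 : ℤ)) := by
    rw [zpow_sum_eq_prod _ hq, ← Finset.prod_mul_distrib]
    exact Finset.prod_congr rfl (fun p _ => factor_eq (hookLen lam p))
  rw [hprod, expo_identity lam N hanti hN, mul_comm
    ((RatFunc.X : RatFunc ℂ) ^ (∑ p ∈ T, (2 - 2 * hookLen lam p))) _, mul_assoc,
    ← zpow_add₀ hq]
end
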